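/- arXiv:1903.03998 — 5 statements merged into one kernel-verified Lean document; each statement's English description precedes it below -/
import Mathlib

section
/- For all natural numbers n ≥ 1 and 1 ≤ i ≤ n, the identity ∏_{k=1}^{i} (q^{n+1} - q^k)/(q^k - 1) = ∑_{S ∈ C([n], i)} q^{|S|} holds as rational functions in q, where C([n], i) denotes the set of i-element subsets of {1,...,n} and |S| denotes the sum of the elements of S. -/
open Finset

private lemma xk_ne {k : ℕ} (hk : 1 ≤ k) :
    (RatFunc.X : RatFunc ℚ) ^ k - 1 ≠ 0 := by
  have h1 : (RatFunc.X : RatFunc ℚ) ^ k - 1 =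
      algebraMap (Polynomial ℚ) (RatFunc ℚ) (Polynomial.X ^ k - 1) := by
    simp [map_sub, map_pow, RatFunc.algebraMap_X]
  rw [h1]
  apply RatFunc.algebraMap_ne_zero
  simpa using Polynomial.X_pow_sub_C_ne_zero (by omega : 0 < k) (1 : ℚ)

private lemma x_ne : (RatFunc.X : RatFunc ℚ) ≠ 0 := RatFunc.X_ne_zero

/-- telescoping product -/
private lemma telescope (n : ℕ) : ∀ i ≤ n,
    ∏ k ∈ Finset.Icc 1 i,
      (((RatFunc.X : RatFunc ℚ) ^ (n + 2) - RatFunc.X ^ k) /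
        ((RatFunc.X : RatFunc ℚ) ^ (n + 1) - RatFunc.X ^ k)) =
      ((RatFunc.X : RatFunc ℚ) ^ (n + 1) - 1) /
        ((RatFunc.X : RatFunc ℚ) ^ (n + 1 - i) - 1) := by
  intro i
  induction i with
  | zero =>
    intro _
    simp only [Nat.sub_zero]
    rw [Finset.Icc_eq_empty (by omega), Finset.prod_empty,
      div_self (xk_ne (by omega))]
  | succ j ih =>
    intro hj
    rw [Finset.prod_Icc_succ_top (by omega), ih (by omega)]
    obtain ⟨m, hm⟩ : ∃ m, n = j + 1 + m := ⟨n - (j + 1), by omega⟩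
    subst hm
    have e1 : j + 1 + m + 1 - j = m + 2 := by omega
    have e2 : j + 1 + m + 1 - (j + 1) = m + 1 := by omega
    have e3 : j + 1 + m + 2 = (j + 1) + (m + 2) := by omega
    have e4 : j + 1 + m + 1 = (j + 1) + (m + 1) := by omega
    have p1 : (RatFunc.X : RatFunc ℚ) ^ ((j + 1) + (m + 2)) =
        RatFunc.X ^ (j + 1) * (RatFunc.X ^ (m + 1) * RatFunc.X) := by
      ring
    have p2 : (RatFunc.X : RatFunc ℚ) ^ ((j + 1) + (m + 1)) =
        RatFunc.X ^ (j + 1) * RatFunc.X ^ (m + 1) := by ring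
    have p3 : (RatFunc.X : RatFunc ℚ) ^ (m + 2) =
        RatFunc.X ^ (m + 1) * RatFunc.X := by ring
    rw [e1, e2, e3, e4, p1, p2, p3]
    set a := (RatFunc.X : RatFunc ℚ) ^ (j + 1) with ha'
    set b := (RatFunc.X : RatFunc ℚ) ^ (m + 1) with hb'
    have hb1 : b - 1 ≠ 0 := xk_ne (by omega)
    have hb2 : b * RatFunc.X - 1 ≠ 0 := by
      rw [hb', ← pow_succ]; exact xk_ne (by omega)
    have ha : a ≠ 0 := pow_ne_zero _ x_ne
    have hd : a * b - a ≠ 0 := by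
      have h : a * b - a = a * (b - 1) := by ring
      rw [h]; exact mul_ne_zero ha hb1
    field_simp

private lemma top_case (n : ℕ) :
    ∏ k ∈ Finset.Icc 1 (n + 1),
      (((RatFunc.X : RatFunc ℚ) ^ (n + 2) - RatFunc.X ^ k) / (RatFunc.X ^ k - 1)) =
      (RatFunc.X : RatFunc ℚ) ^ (∑ x ∈ Finset.Icc 1 (n + 1), x) := by
  rw [← Finset.prod_pow_eq_pow_sum]
  have step : ∀ k ∈ Finset.Icc 1 (n + 1),
      ((RatFunc.X : RatFunc ℚ) ^ (n + 2) - RatFunc.X ^ k) / (RatFunc.X ^ k - 1) =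
        RatFunc.X ^ k * (((RatFunc.X : RatFunc ℚ) ^ (n + 2 - k) - 1) / (RatFunc.X ^ k - 1)) := by
    intro k hk
    simp only [Finset.mem_Icc] at hk
    have h1 : (RatFunc.X : RatFunc ℚ) ^ (n + 2) = RatFunc.X ^ k * RatFunc.X ^ (n + 2 - k) := by
      rw [← pow_add]; congr 1; omega
    have h2 : (RatFunc.X : RatFunc ℚ) ^ k * RatFunc.X ^ (n + 2 - k) - RatFunc.X ^ k =
        RatFunc.X ^ k * (RatFunc.X ^ (n + 2 - k) - 1) := by ring
    rw [h1, h2, mul_div_assoc]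
  rw [Finset.prod_congr rfl step, Finset.prod_mul_distrib, Finset.prod_div_distrib]
  have hnum : ∏ k ∈ Finset.Icc 1 (n + 1), ((RatFunc.X : RatFunc ℚ) ^ (n + 2 - k) - 1) =
      ∏ k ∈ Finset.Icc 1 (n + 1), ((RatFunc.X : RatFunc ℚ) ^ k - 1) := by
    apply Finset.prod_nbij' (fun k => n + 2 - k) (fun k => n + 2 - k)
    · intro a ha; simp only [Finset.mem_Icc] at *; omega
    · intro a ha; simp only [Finset.mem_Icc] at *; omega
    · intro a ha; simp only [Finset.mem_Icc] at ha; omega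
    · intro a ha; simp only [Finset.mem_Icc] at ha; omega
    · intro a ha; rfl
  rw [hnum, div_self, mul_one]
  exact Finset.prod_ne_zero_iff.mpr fun k hk => xk_ne (Finset.mem_Icc.mp hk).1

private lemma aux : ∀ n : ℕ, ∀ i ≤ n,
    ∏ k ∈ Finset.Icc 1 i,
        (((RatFunc.X : RatFunc ℚ) ^ (n + 1) - RatFunc.X ^ k) / (RatFunc.X ^ k - 1)) =
      ∑ S ∈ (Finset.Icc 1 n).powersetCard i,
        (RatFunc.X : RatFunc ℚ) ^ (∑ x ∈ S, x) := by
  intro n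
  induction n with
  | zero =>
    intro i hi
    have h0 : i = 0 := by omega
    subst h0
    simp
  | succ n ih =>
    intro i hi
    rcases Nat.eq_zero_or_pos i with h0 | h0
    · subst h0; simp
    rcases Nat.lt_or_ge i (n + 1) with hlt | hge
    · -- 1 ≤ i ≤ n : recurrence case
      obtain ⟨j, rfl⟩ : ∃ j, i = j + 1 := ⟨i - 1, by omega⟩
      have hjn : j + 1 ≤ n := by omega
      -- RHS manipulation
      have hins : Finset.Icc 1 (n + 1) = insert (n + 1) (Finset.Icc 1 n) := by
        ext x; simp only [Finset.mem_Icc, Finset.mem_insert]; omega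
      have hnm : n + 1 ∉ Finset.Icc 1 n := by simp
      rw [hins, Finset.powersetCard_succ_insert hnm]
      have hdisj : Disjoint ((Finset.Icc 1 n).powersetCard (j + 1))
          (((Finset.Icc 1 n).powersetCard j).image (insert (n + 1))) := by
        rw [Finset.disjoint_left]
        intro S hS hS2
        obtain ⟨T, hT, rfl⟩ := Finset.mem_image.mp hS2
        have := (Finset.mem_powersetCard.mp hS).1 (Finset.mem_insert_self (n + 1) T)
        simp only [Finset.mem_Icc] at this; omega
      rw [Finset.sum_union hdisj]
      have hinj : ∀ x ∈ (Finset.Icc 1 n).powersetCard j,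
          ∀ y ∈ (Finset.Icc 1 n).powersetCard j,
          insert (n + 1) x = insert (n + 1) y → x = y := by
        intro x hx y hy h
        have hx' : n + 1 ∉ x := fun hm => by
          have := (Finset.mem_powersetCard.mp hx).1 hm
          simp only [Finset.mem_Icc] at this; omega
        have hy' : n + 1 ∉ y := fun hm => by
          have := (Finset.mem_powersetCard.mp hy).1 hm
          simp only [Finset.mem_Icc] at this; omega
        rw [← Finset.erase_insert hx', ← Finset.erase_insert hy', h]
      rw [Finset.sum_image hinj]
      have hterm : ∀ S ∈ (Finset.Icc 1 n).powersetCard j,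
          (RatFunc.X : RatFunc ℚ) ^ (∑ x ∈ insert (n + 1) S, x) =
            (RatFunc.X : RatFunc ℚ) ^ (n + 1) * RatFunc.X ^ (∑ x ∈ S, x) := by
        intro S hS
        have hS' : n + 1 ∉ S := fun hm => by
          have := (Finset.mem_powersetCard.mp hS).1 hm
          simp only [Finset.mem_Icc] at this; omega
        rw [Finset.sum_insert hS', pow_add]
      rw [Finset.sum_congr rfl hterm, ← Finset.mul_sum, ← ih (j + 1) hjn, ← ih j (by omega)]
      -- LHS manipulation
      have hstep : ∀ k ∈ Finset.Icc 1 (j + 1),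
          ((RatFunc.X : RatFunc ℚ) ^ (n + 1 + 1) - RatFunc.X ^ k) / (RatFunc.X ^ k - 1) =
            ((RatFunc.X : RatFunc ℚ) ^ (n + 1) - RatFunc.X ^ k) / (RatFunc.X ^ k - 1) *
              (((RatFunc.X : RatFunc ℚ) ^ (n + 2) - RatFunc.X ^ k) /
                ((RatFunc.X : RatFunc ℚ) ^ (n + 1) - RatFunc.X ^ k)) := by
        intro k hk
        simp only [Finset.mem_Icc] at hk
        have hc : (RatFunc.X : RatFunc ℚ) ^ (n + 1) - RatFunc.X ^ k ≠ 0 := by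
          have h1 : (RatFunc.X : RatFunc ℚ) ^ (n + 1) - RatFunc.X ^ k =
              RatFunc.X ^ k * (RatFunc.X ^ (n + 1 - k) - 1) := by
            rw [mul_sub, ← pow_add, mul_one]; congr 2; omega
          rw [h1]
          exact mul_ne_zero (pow_ne_zero _ x_ne) (xk_ne (by omega))
        rw [div_mul_div_comm, mul_comm ((RatFunc.X : RatFunc ℚ) ^ k - 1)
          ((RatFunc.X : RatFunc ℚ) ^ (n + 1) - RatFunc.X ^ k),
          mul_div_mul_left _ _ hc]
      rw [Finset.prod_congr rfl hstep, Finset.prod_mul_distrib, telescope n (j + 1) hjn,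
        Finset.prod_Icc_succ_top (by omega : 1 ≤ j + 1)]
      -- now a pure field identity times a common factor
      obtain ⟨m, hm⟩ : ∃ m, n = j + 1 + m := ⟨n - (j + 1), by omega⟩
      subst hm
      have e1 : j + 1 + m + 1 - (j + 1) = m + 1 := by omega
      have p2 : (RatFunc.X : RatFunc ℚ) ^ (j + 1 + m + 1) =
          RatFunc.X ^ (j + 1) * RatFunc.X ^ (m + 1) := by ring
      rw [e1, p2]
      set P := ∏ k ∈ Finset.Icc 1 j,
        (((RatFunc.X : RatFunc ℚ) ^ (j + 1) * RatFunc.X ^ (m + 1) - RatFunc.X ^ k) /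
          (RatFunc.X ^ k - 1)) with hP
      set a := (RatFunc.X : RatFunc ℚ) ^ (j + 1) with ha'
      set b := (RatFunc.X : RatFunc ℚ) ^ (m + 1) with hb'
      have ha1 : a - 1 ≠ 0 := xk_ne (by omega)
      have hb1 : b - 1 ≠ 0 := xk_ne (by omega)
      have key : (a * b - a) / (a - 1) * ((a * b - 1) / (b - 1)) =
          (a * b - a) / (a - 1) + a * b := by
        field_simp
        ring
      calc P * ((a * b - a) / (a - 1)) * ((a * b - 1) / (b - 1))
          = P * ((a * b - a) / (a - 1) * ((a * b - 1) / (b - 1))) := by ring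
        _ = P * ((a * b - a) / (a - 1) + a * b) := by rw [key]
        _ = P * ((a * b - a) / (a - 1)) + a * b * P := by ring
    · -- i = n + 1 case
      have hi' : i = n + 1 := by omega
      subst hi'
      have hc : (Finset.Icc 1 (n + 1)).card = n + 1 := by
        rw [Nat.card_Icc]; omega
      have hpc := Finset.powersetCard_self (Finset.Icc 1 (n + 1))
      rw [hc] at hpc
      rw [hpc, Finset.sum_singleton]
      exact top_case n

/-- For `n ≥ 1` and `1 ≤ i ≤ n`, the identity
`∏_{k=1}^{i} (q^{n+1} - q^k)/(q^k - 1) = ∑_{S ∈ C([n],i)} q^{|S|}`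
as rational functions in `q`, where the sum is over `i`-element subsets `S` of `{1,…,n}`
and `|S|` is the sum of elements of `S`. -/
theorem stmt_2 (n i : ℕ) (hn : 1 ≤ n) (h1 : 1 ≤ i) (h2 : i ≤ n) :
    ∏ k ∈ Finset.Icc 1 i,
        (((RatFunc.X : RatFunc ℚ) ^ (n + 1) - RatFunc.X ^ k) / (RatFunc.X ^ k - 1)) =
      ∑ S ∈ (Finset.Icc 1 n).powersetCard i,
        (RatFunc.X : RatFunc ℚ) ^ (∑ x ∈ S, x) := by
  exact aux n i h2
end

section
/- Let a be an area sequence of length n, and define its transpose a^T by (a^T)_i = #{j : j - a_j ≤ n+1-i ≤ j - 1} (the number of edges (u,v) of Γ_a with u = n+1-i, i.e., the column counts of the Dyck diagram). Then the multiset of entries of a^T equals the multiset of entries of a; in particular a^T is again an area sequence of the same total sum. -/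
private lemma stmt8_bmono (n : ℕ) (a : ℕ → ℕ)
    (h1 : ∀ i ∈ Finset.Icc 1 n, a i ≤ i - 1)
    (h2 : ∀ i, 1 ≤ i → i < n → a (i + 1) ≤ a i + 1) :
    ∀ j j', 1 ≤ j → j ≤ j' → j' ≤ n → j - a j ≤ j' - a j' := by
  intro j j' hj hjj' hj'n
  induction j' with
  | zero => omega
  | succ m ih =>
    rcases Nat.lt_or_ge j (m + 1) with h | h
    · have hm : 1 ≤ m := by omega
      have h2m := h2 m hm (by omega)
      have h1m := h1 m (Finset.mem_Icc.mpr ⟨hm, by omega⟩)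
      have := ih (by omega) (by omega)
      omega
    · have : j = m + 1 := by omega
      subst this; omega

private lemma stmt8_keyC (n : ℕ) (a : ℕ → ℕ)
    (h1 : ∀ i ∈ Finset.Icc 1 n, a i ≤ i - 1)
    (h2 : ∀ i, 1 ≤ i → i < n → a (i + 1) ≤ a i + 1)
    (u k : ℕ) (hu : 1 ≤ u) (hun : u ≤ n) (hk : 1 ≤ k) :
    k ≤ ((Finset.Icc 1 n).filter (fun j => j - a j ≤ u ∧ u ≤ j - 1)).card ↔
      (u + k ≤ n ∧ u + k - a (u + k) ≤ u) := by
  constructor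
  · intro hcard
    have hsub : (Finset.Icc 1 n).filter (fun j => j - a j ≤ u ∧ u ≤ j - 1) ⊆
        Finset.Icc (u + 1) n := by
      intro j hj
      simp only [Finset.mem_filter, Finset.mem_Icc] at hj ⊢
      omega
    have hcard1 : k ≤ n - u := by
      have := Finset.card_le_card hsub
      rw [Nat.card_Icc] at this
      omega
    refine ⟨by omega, ?_⟩
    by_contra hbc
    push_neg at hbc
    have hsub2 : (Finset.Icc 1 n).filter (fun j => j - a j ≤ u ∧ u ≤ j - 1) ⊆
        Finset.Icc (u + 1) (u + k - 1) := by
      intro j hj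
      simp only [Finset.mem_filter, Finset.mem_Icc] at hj ⊢
      refine ⟨by omega, ?_⟩
      by_contra hjk
      push_neg at hjk
      have := stmt8_bmono n a h1 h2 (u + k) j (by omega) (by omega) (by omega)
      omega
    have := Finset.card_le_card hsub2
    rw [Nat.card_Icc] at this
    omega
  · rintro ⟨hkn, hbk⟩
    have hsub : Finset.Icc (u + 1) (u + k) ⊆
        (Finset.Icc 1 n).filter (fun j => j - a j ≤ u ∧ u ≤ j - 1) := by
      intro j hj
      simp only [Finset.mem_Icc] at hj
      simp only [Finset.mem_filter, Finset.mem_Icc]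
      have := stmt8_bmono n a h1 h2 j (u + k) (by omega) (by omega) (by omega)
      omega
    have := Finset.card_le_card hsub
    rw [Nat.card_Icc] at this
    omega

private lemma stmt8_levels (n : ℕ) (a aT : ℕ → ℕ)
    (h1 : ∀ i ∈ Finset.Icc 1 n, a i ≤ i - 1)
    (h2 : ∀ i, 1 ≤ i → i < n → a (i + 1) ≤ a i + 1)
    (hT : ∀ i, aT i = ((Finset.Icc 1 n).filter
        (fun j => j - a j ≤ n + 1 - i ∧ n + 1 - i ≤ j - 1)).card)
    (k : ℕ) (hk : 1 ≤ k) :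
    ((Finset.Icc 1 n).filter (fun i => k ≤ aT i)).card =
      ((Finset.Icc 1 n).filter (fun i => k ≤ a i)).card := by
  apply Finset.card_bij' (fun i _ => n + 1 - i + k) (fun j _ => n + 1 - j + k)
  · intro i hi
    simp only [Finset.mem_filter, Finset.mem_Icc] at hi ⊢
    obtain ⟨⟨hi1, hin⟩, hkT⟩ := hi
    rw [hT i] at hkT
    have hu1 : 1 ≤ n + 1 - i := by omega
    have hun : n + 1 - i ≤ n := by omega
    have := (stmt8_keyC n a h1 h2 (n + 1 - i) k hu1 hun hk).mp hkT
    obtain ⟨hle, hble⟩ := this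
    have hfi : n + 1 - i + k = (n + 1 - i) + k := by omega
    have h1f := h1 ((n + 1 - i) + k) (Finset.mem_Icc.mpr ⟨by omega, hle⟩)
    refine ⟨⟨by omega, by omega⟩, by omega⟩
  · intro j hj
    simp only [Finset.mem_filter, Finset.mem_Icc] at hj ⊢
    obtain ⟨⟨hj1, hjn⟩, hka⟩ := hj
    have h1j := h1 j (Finset.mem_Icc.mpr ⟨hj1, hjn⟩)
    have hjk : k + 1 ≤ j := by omega
    refine ⟨⟨by omega, by omega⟩, ?_⟩
    rw [hT (n + 1 - j + k)]
    have hu : n + 1 - (n + 1 - j + k) = j - k := by omega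
    rw [hu]
    refine (stmt8_keyC n a h1 h2 (j - k) k (by omega) (by omega) hk).mpr ?_
    rw [show j - k + k = j from by omega]
    exact ⟨by omega, by omega⟩
  · intro i hi
    simp only [Finset.mem_filter, Finset.mem_Icc] at hi
    obtain ⟨⟨hi1, hin⟩, hkT⟩ := hi
    rw [hT i] at hkT
    have := (stmt8_keyC n a h1 h2 (n + 1 - i) k (by omega) (by omega) hk).mp hkT
    omega
  · intro j hj
    simp only [Finset.mem_filter, Finset.mem_Icc] at hj
    have h1j := h1 j (Finset.mem_Icc.mpr ⟨hj.1.1, hj.1.2⟩)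
    omega

private lemma stmt8_multiset_of_levels {α : Type*} [DecidableEq α] (F : Finset α)
    (f g : α → ℕ)
    (h : ∀ k, ((F.filter (fun i => k ≤ f i)).card = (F.filter (fun i => k ≤ g i)).card)) :
    Multiset.map f F.val = Multiset.map g F.val := by
  have key : ∀ (f : α → ℕ) (k : ℕ),
      (F.filter (fun i => f i = k)).card + (F.filter (fun i => k + 1 ≤ f i)).card =
        (F.filter (fun i => k ≤ f i)).card := by
    intro f k
    have hsplit := Finset.card_filter_add_card_filter_not
      (s := F.filter (fun i => k ≤ f i)) (p := fun i => f i = k)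
    rw [Finset.filter_filter, Finset.filter_filter] at hsplit
    rw [show (F.filter (fun i => k ≤ f i ∧ f i = k)) = F.filter (fun i => f i = k) from
      Finset.filter_congr (by intro i _; constructor <;> (intro h'; omega)),
      show (F.filter (fun i => k ≤ f i ∧ ¬ f i = k)) = F.filter (fun i => k + 1 ≤ f i) from
      Finset.filter_congr (by intro i _; constructor <;> (intro h'; omega))] at hsplit
    exact hsplit
  ext k
  have cf : Multiset.count k (Multiset.map f F.val) = (F.filter (fun i => f i = k)).card := by
    rw [Multiset.count_map]
    rw [show F.filter (fun i => f i = k) = F.filter (fun i => k = f i) from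
      Finset.filter_congr (by intro i _; exact eq_comm)]
    rfl
  have cg : Multiset.count k (Multiset.map g F.val) = (F.filter (fun i => g i = k)).card := by
    rw [Multiset.count_map]
    rw [show F.filter (fun i => g i = k) = F.filter (fun i => k = g i) from
      Finset.filter_congr (by intro i _; exact eq_comm)]
    rfl
  rw [cf, cg]
  have kf := key f k
  have kg := key g k
  have h1 := h k
  have h2 := h (k + 1)
  omega

/-- Let `a` be an area sequence of length `n` and define its transpose `a^T` by
`(a^T)_i = #{j ∈ [n] : j - a_j ≤ n+1-i ≤ j-1}` (column counts of the Dyck diagram).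
Then the multiset of entries of `a^T` equals the multiset of entries of `a`;
in particular `a^T` is again an area sequence with the same total sum. -/
theorem stmt_8 (n : ℕ) (a aT : ℕ → ℕ)
    (h1 : ∀ i ∈ Finset.Icc 1 n, a i ≤ i - 1)
    (h2 : ∀ i, 1 ≤ i → i < n → a (i + 1) ≤ a i + 1)
    (hT : ∀ i, aT i = ((Finset.Icc 1 n).filter
        (fun j => j - a j ≤ n + 1 - i ∧ n + 1 - i ≤ j - 1)).card) :
    Multiset.map aT (Finset.Icc 1 n).val = Multiset.map a (Finset.Icc 1 n).val ∧
    (∀ i ∈ Finset.Icc 1 n, aT i ≤ i - 1) ∧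
    (∀ i, 1 ≤ i → i < n → aT (i + 1) ≤ aT i + 1) ∧
    ∑ i ∈ Finset.Icc 1 n, aT i = ∑ i ∈ Finset.Icc 1 n, a i := by
  have hmult : Multiset.map aT (Finset.Icc 1 n).val = Multiset.map a (Finset.Icc 1 n).val := by
    apply stmt8_multiset_of_levels
    intro k
    rcases Nat.eq_zero_or_pos k with hk0 | hk
    · subst hk0; simp
    · exact stmt8_levels n a aT h1 h2 hT k hk
  refine ⟨hmult, ?_, ?_, ?_⟩
  · intro i hi
    simp only [Finset.mem_Icc] at hi
    rw [hT i]
    have hsub : (Finset.Icc 1 n).filter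
        (fun j => j - a j ≤ n + 1 - i ∧ n + 1 - i ≤ j - 1) ⊆
        Finset.Icc (n + 2 - i) n := by
      intro j hj
      simp only [Finset.mem_filter, Finset.mem_Icc] at hj ⊢
      omega
    have := Finset.card_le_card hsub
    rw [Nat.card_Icc] at this
    omega
  · intro i hi1 hin
    rw [hT (i + 1), hT i]
    have heq : n + 1 - (i + 1) = n - i := by omega
    rw [heq]
    have hsub : (Finset.Icc 1 n).filter
        (fun j => j - a j ≤ n - i ∧ n - i ≤ j - 1) ⊆
        insert (n + 1 - i) ((Finset.Icc 1 n).filter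
          (fun j => j - a j ≤ n + 1 - i ∧ n + 1 - i ≤ j - 1)) := by
      intro j hj
      simp only [Finset.mem_filter, Finset.mem_Icc, Finset.mem_insert] at hj ⊢
      rcases eq_or_ne j (n + 1 - i) with h | h
      · exact Or.inl h
      · exact Or.inr ⟨hj.1, by omega, by omega⟩
    calc ((Finset.Icc 1 n).filter (fun j => j - a j ≤ n - i ∧ n - i ≤ j - 1)).card
        ≤ (insert (n + 1 - i) ((Finset.Icc 1 n).filter
          (fun j => j - a j ≤ n + 1 - i ∧ n + 1 - i ≤ j - 1))).card :=
          Finset.card_le_card hsub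
      _ ≤ _ + 1 := Finset.card_insert_le _ _
  · rw [Finset.sum_eq_multiset_sum, Finset.sum_eq_multiset_sum, hmult]
end

section
/- Let a be an area sequence of length n ≥ 3 and suppose (i,j) with 3 ≤ j ≤ n is an admissible edge of a, meaning: i = j - a_j; either j = n or a_j ≥ a_{j+1} + 1; a_j ≥ 2; and a_i + 1 = a_{i+1}. Then for all vertices k with k < i or k > i+1: (k,i) is an edge of Γ_a if and only if (k,i+1) is an edge of Γ_a, and (i,k) is an edge of Γ_a if and only if (i+1,k) is an edge of Γ_a. -/
/-- `(u,v)` is an edge of the unit interval graph `Γ_a`, i.e. `u < v` and `v - a_v ≤ u`. -/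
def UIEdge (a : ℕ → ℕ) (u v : ℕ) : Prop := u < v ∧ v - a v ≤ u

/-- If `(i,j)` is an admissible edge of an area sequence `a` of length `n ≥ 3`
(`i = j - a_j`; `j = n` or `a_j ≥ a_{j+1} + 1`; `a_j ≥ 2`; `a_i + 1 = a_{i+1}`),
then for all vertices `k` with `k < i` or `k > i+1`:
`(k,i)` is an edge iff `(k,i+1)` is an edge, and `(i,k)` is an edge iff `(i+1,k)` is. -/
theorem stmt_9 (n : ℕ) (a : ℕ → ℕ) (i j : ℕ)
    (h1 : ∀ m ∈ Finset.Icc 1 n, a m ≤ m - 1)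
    (h2 : ∀ m, 1 ≤ m → m < n → a (m + 1) ≤ a m + 1)
    (hn : 3 ≤ n) (hj1 : 3 ≤ j) (hj2 : j ≤ n)
    (hadm1 : i = j - a j)
    (hadm2 : j = n ∨ a (j + 1) + 1 ≤ a j)
    (hadm3 : 2 ≤ a j)
    (hadm4 : a i + 1 = a (i + 1)) :
    ∀ k, 1 ≤ k → k ≤ n → (k < i ∨ i + 1 < k) →
      (UIEdge a k i ↔ UIEdge a k (i + 1)) ∧ (UIEdge a i k ↔ UIEdge a (i + 1) k) := by
  have hmono : ∀ m1 m2, 1 ≤ m1 → m1 ≤ m2 → m2 ≤ n → m1 - a m1 ≤ m2 - a m2 := by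
    intro m1 m2 hm1 hle hle2
    induction m2 with
    | zero => omega
    | succ m ih =>
      rcases Nat.lt_or_ge m1 (m + 1) with h | h
      · have hm : 1 ≤ m := by omega
        have hstep := h2 m hm (by omega)
        have hih := ih (by omega) (by omega)
        omega
      · have hh : m1 = m + 1 := by omega
        subst hh
        exact le_refl _
  have haj : a j ≤ j - 1 := h1 j (by simp [Finset.mem_Icc]; omega)
  have hkey : ∀ k, i + 1 < k → k ≤ n → (k - a k ≤ i ∨ i + 2 ≤ k - a k) := by
    intro k hk1 hk2
    rcases le_or_gt k j with h | h
    · left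
      have := hmono k j (by omega) h hj2
      omega
    · right
      have hjn : j < n := by omega
      have hja : a (j + 1) + 1 ≤ a j := by rcases hadm2 with h' | h' <;> omega
      have := hmono (j + 1) k (by omega) (by omega) hk2
      omega
  intro k hk1 hk2 hk
  have e1 : a (i + 1) = a i + 1 := hadm4.symm
  rcases hk with h | h
  · constructor <;> (simp only [UIEdge]; omega)
  · have := hkey k h hk2
    constructor <;> (simp only [UIEdge]; omega)
end

section
/- Let G be a finite directed graph on [n] containing vertices i, i+1, j with edges (i,i+1), (i,j), (i+1,j), and suppose that for every other vertex k, (k,i) ∈ E(G) iff (k,i+1) ∈ E(G) and (i,k) ∈ E(G) iff (i+1,k) ∈ E(G). Then the weighted sum over colorings κ : [n] → [N] satisfying κ(i) < κ(j) ≤ κ(i+1), weighted by x^κ q^{asc(κ)} (ascents counted over all edges except (i,j), (i+1,j)), but with an extra factor q for the ascent (i,i+1), equals the corresponding weighted sum over colorings satisfying κ(i+1) < κ(j) ≤ κ(i); the bijection is given by swapping the colors of vertices i and i+1. -/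
/-- Color-swapping bijection: in a digraph `E` on `[n]` with edges `(u,w)`, `(u,j)`, `(w,j)`
such that every other vertex `k` satisfies `(k,u) ∈ E ↔ (k,w) ∈ E` and
`(u,k) ∈ E ↔ (w,k) ∈ E`, the weighted sum over colorings with `κ u < κ j ≤ κ w`
(ascents counted over the edges other than `(u,w)`, `(u,j)`, `(w,j)`, with an extra
factor `q` for the ascent `(u,w)`) equals the corresponding weighted sum (with its
factor `q`) over colorings with `κ w < κ j ≤ κ u`; the bijection swaps the colors
of `u` and `w`. -/
theorem stmt_12 {R : Type*} [CommRing R] (n N : ℕ)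
    (E : Finset (Fin n × Fin n)) (u w j : Fin n)
    (huw : u ≠ w) (huj : u ≠ j) (hwj : w ≠ j)
    (e1 : (u, w) ∈ E) (e2 : (u, j) ∈ E) (e3 : (w, j) ∈ E)
    (e4 : (w, u) ∉ E)
    (hsym : ∀ k : Fin n, k ≠ u → k ≠ w →
      (((k, u) ∈ E ↔ (k, w) ∈ E) ∧ ((u, k) ∈ E ↔ (w, k) ∈ E)))
    (q : R) (x : Fin N → R) :
    q * (∑ κ : Fin n → Fin N, if κ u < κ j ∧ κ j ≤ κ w then
        (∏ v, x (κ v)) *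
          q ^ ((E \ {(u, w), (u, j), (w, j)}).filter (fun e => κ e.1 < κ e.2)).card
      else 0)
    = q * (∑ κ : Fin n → Fin N, if κ w < κ j ∧ κ j ≤ κ u then
        (∏ v, x (κ v)) *
          q ^ ((E \ {(u, w), (u, j), (w, j)}).filter (fun e => κ e.1 < κ e.2)).card
      else 0) := by
  set σ := Equiv.swap u w with hσdef
  have hσu : σ u = w := Equiv.swap_apply_left u w
  have hσw : σ w = u := Equiv.swap_apply_right u w
  have hσj : σ j = j := Equiv.swap_apply_of_ne_of_ne huj.symm hwj.symm
  have hσσ : ∀ a, σ (σ a) = a := fun a => Equiv.swap_apply_self u w a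
  have key : ∀ a b : Fin n, (a, b) ∈ E \ {(u, w), (u, j), (w, j)} → a ≠ b →
      (σ a, σ b) ∈ E \ {(u, w), (u, j), (w, j)} := by
    intro a b hab hne
    rw [Finset.mem_sdiff] at hab
    obtain ⟨hE, hS⟩ := hab
    simp only [Finset.mem_insert, Finset.mem_singleton, Prod.mk.injEq, not_or, not_and] at hS
    obtain ⟨h1, h2, h3⟩ := hS
    rw [Finset.mem_sdiff]
    constructor
    · by_cases hau : a = u
      · have hbu : b ≠ u := fun h => hne (hau.trans h.symm)
        have hbw : b ≠ w := fun h => h1 hau h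
        rw [hau, hσu, Equiv.swap_apply_of_ne_of_ne hbu hbw]
        exact (hsym b hbu hbw).2.mp (by rw [← hau]; exact hE)
      · by_cases haw : a = w
        · have hbw : b ≠ w := fun h => hne (haw.trans h.symm)
          have hbu : b ≠ u := fun h => e4 (by rw [← haw, ← h]; exact hE)
          rw [haw, hσw, Equiv.swap_apply_of_ne_of_ne hbu hbw]
          exact (hsym b hbu hbw).2.mpr (by rw [← haw]; exact hE)
        · rw [Equiv.swap_apply_of_ne_of_ne hau haw]
          by_cases hbu : b = u
          · rw [hbu, hσu]
            exact (hsym a hau haw).1.mp (by rw [← hbu]; exact hE)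
          · by_cases hbw : b = w
            · rw [hbw, hσw]
              exact (hsym a hau haw).1.mpr (by rw [← hbw]; exact hE)
            · rw [Equiv.swap_apply_of_ne_of_ne hbu hbw]
              exact hE
    · simp only [Finset.mem_insert, Finset.mem_singleton, Prod.mk.injEq, not_or, not_and]
      have inj := σ.injective
      refine ⟨fun ha hb => ?_, fun ha hb => ?_, fun ha hb => ?_⟩
      · -- σ a = u, σ b = w ⇒ a = w, b = u ⇒ (w,u) ∈ E, contra e4
        have ha' : a = w := inj (by rw [ha, hσw])
        have hb' : b = u := inj (by rw [hb, hσu])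
        exact e4 (ha' ▸ hb' ▸ hE)
      · have ha' : a = w := inj (by rw [ha, hσw])
        have hb' : b = j := inj (by rw [hb, hσj])
        exact h3 ha' hb'
      · have ha' : a = u := inj (by rw [ha, hσu])
        have hb' : b = j := inj (by rw [hb, hσj])
        exact h2 ha' hb'
  have hcard : ∀ κ : Fin n → Fin N,
      ((E \ {(u, w), (u, j), (w, j)}).filter (fun e => κ (σ e.1) < κ (σ e.2))).card =
      ((E \ {(u, w), (u, j), (w, j)}).filter (fun e => κ e.1 < κ e.2)).card := by
    intro κ
    apply Finset.card_bij' (fun e _ => (σ e.1, σ e.2)) (fun e _ => (σ e.1, σ e.2))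
    · intro e he
      rw [Finset.mem_filter] at he ⊢
      obtain ⟨hmem, hlt⟩ := he
      have hne : e.1 ≠ e.2 := fun h => lt_irrefl _ (h ▸ hlt)
      exact ⟨key e.1 e.2 (by simpa using hmem) hne, hlt⟩
    · intro e he
      rw [Finset.mem_filter] at he ⊢
      obtain ⟨hmem, hlt⟩ := he
      have hne : e.1 ≠ e.2 := fun h => lt_irrefl _ (by rw [h] at hlt; exact hlt)
      refine ⟨key e.1 e.2 (by simpa using hmem) hne, by simpa [hσσ] using hlt⟩
    · intro e _; simp [hσσ]
    · intro e _; simp [hσσ]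
  congr 1
  apply Fintype.sum_bijective (fun κ : Fin n → Fin N => κ ∘ σ)
  · have hinv : Function.Involutive (fun κ : Fin n → Fin N => κ ∘ σ) := by
      intro κ; funext v; simp [Function.comp, hσσ]
    exact hinv.bijective
  · intro κ
    simp only [Function.comp_apply, hσu, hσw, hσj]
    rcases Classical.em (κ u < κ j ∧ κ j ≤ κ w) with h | h
    · rw [if_pos h, if_pos h]
      congr 1
      · exact (Equiv.prod_comp σ (fun v => x (κ v))).symm
      · rw [hcard κ]
    · rw [if_neg h, if_neg h]
end

section
/- Let μ' ⊢ n and define the transformed Hall–Littlewood polynomial H_{μ'}(x;q) = ∏_{1≤i<j≤n} (1-R_{ij})/(1-qR_{ij}) · h_{μ'}(x), where R_{ij} are raising operators on the indices of complete homogeneous symmetric functions. Then H_{μ'}(x;q+1) is a nonnegative integer-coefficient (in q) linear combination of complete homogeneous symmetric functions h_ν(x); i.e., the transformed Hall–Littlewood polynomials evaluated at q+1 are h-positive. -/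
/-- The coefficient of `R^m` in `(1-R)/(1-qR) = ∑_m (q^m - q^{m-1}) R^m` (with value `1`
for `m = 0`). -/
noncomputable def coeffD (q : Polynomial ℤ) (m : ℕ) : Polynomial ℤ :=
  if m = 0 then 1 else q ^ m - q ^ (m - 1)

/-- The index vector obtained from `μ` by applying the raising operator `R_{p.1,p.2}`
`t p` times for every pair `p.1 < p.2`. -/
def raisedVec {n : ℕ} (μ : Fin n → ℕ) {B : ℕ}
    (t : Fin n × Fin n → Fin (B + 1)) (k : Fin n) : ℤ :=
  (μ k : ℤ) + ∑ p ∈ Finset.univ.filter (fun p : Fin n × Fin n => p.1 < p.2),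
    (t p : ℤ) * ((if p.1 = k then 1 else 0) - (if p.2 = k then 1 else 0))

/-- `h_v = ∏ k h_{v k}` in `N` variables over `ℤ[q]`, with the convention that `h_v = 0`
when some index is negative. -/
noncomputable def hProd (N n : ℕ) (v : Fin n → ℤ) : MvPolynomial (Fin N) (Polynomial ℤ) :=
  if ∀ k, 0 ≤ v k then
    ∏ k, MvPolynomial.hsymm (Fin N) (Polynomial ℤ) ((v k).toNat)
  else 0

/-- The transformed Hall–Littlewood polynomial
`H_μ(x;q) = ∏_{i<j} (1-R_{ij})/(1-qR_{ij}) · h_μ(x)`, expanded as a (finite) sum over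
the powers `t` of the raising operators; powers beyond `n·|μ|` contribute `0` since the
resulting index vector has a negative entry, so the sum may be truncated there. -/
noncomputable def transformedHL (N n : ℕ) (q : Polynomial ℤ) (μ : Fin n → ℕ) :
    MvPolynomial (Fin N) (Polynomial ℤ) :=
  ∑ t : Fin n × Fin n → Fin (n * (∑ i, μ i) + 1),
    MvPolynomial.C
        (∏ p ∈ Finset.univ.filter (fun p : Fin n × Fin n => p.1 < p.2), coeffD q (t p)) *
      hProd N n (raisedVec μ t)

def PNonneg (p : Polynomial ℤ) : Prop := ∀ m, 0 ≤ p.coeff m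

lemma PNonneg.mul {p q : Polynomial ℤ} (hp : PNonneg p) (hq : PNonneg q) :
    PNonneg (p * q) := by
  intro m
  rw [Polynomial.coeff_mul]
  exact Finset.sum_nonneg fun x _ => mul_nonneg (hp _) (hq _)

lemma PNonneg.one : PNonneg 1 := by
  intro m; rw [Polynomial.coeff_one]; split_ifs <;> norm_num

lemma PNonneg.prod {ι : Type*} (s : Finset ι) (f : ι → Polynomial ℤ)
    (h : ∀ i ∈ s, PNonneg (f i)) : PNonneg (∏ i ∈ s, f i) := by
  classical
  induction s using Finset.cons_induction with
  | empty => simpa using PNonneg.one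
  | cons a s ha ih =>
    rw [Finset.prod_cons]
    exact (h a (Finset.mem_cons_self a s)).mul
      (ih fun i hi => h i (Finset.mem_cons_of_mem hi))

lemma pnonneg_X1_pow (k : ℕ) : PNonneg ((Polynomial.X + 1 : Polynomial ℤ) ^ k) := by
  induction k with
  | zero => simpa using PNonneg.one
  | succ k ih =>
    rw [pow_succ]
    refine ih.mul ?_
    intro m
    rw [Polynomial.coeff_add, Polynomial.coeff_X, Polynomial.coeff_one]
    split_ifs <;> norm_num

lemma pnonneg_coeffD (m : ℕ) : PNonneg (coeffD (Polynomial.X + 1) m) := by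
  unfold coeffD
  split_ifs with h
  · exact PNonneg.one
  · obtain ⟨k, rfl⟩ := Nat.exists_eq_succ_of_ne_zero h
    have hm : (Polynomial.X + 1 : Polynomial ℤ) ^ (k + 1) - (Polynomial.X + 1) ^ (k + 1 - 1)
        = Polynomial.X * (Polynomial.X + 1) ^ (k + 1 - 1) := by
      simp only [Nat.add_sub_cancel, pow_succ]
      ring
    rw [hm]
    refine PNonneg.mul ?_ (pnonneg_X1_pow _)
    intro k; rw [Polynomial.coeff_X]; split_ifs <;> norm_num

/-- The transformed Hall–Littlewood polynomial evaluated at `q+1` is `h`-positive: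
it is a linear combination of products of complete homogeneous symmetric functions
whose coefficients are polynomials in `q` with nonnegative integer coefficients. -/
theorem stmt_14 (N n : ℕ) (μ : Fin n → ℕ) (hμ : Antitone μ) :
    ∃ (F : Finset (Fin n → ℕ)) (c : (Fin n → ℕ) → Polynomial ℤ),
      (∀ ν ∈ F, ∀ m, 0 ≤ (c ν).coeff m) ∧
      transformedHL N n (Polynomial.X + 1) μ =
        ∑ ν ∈ F, MvPolynomial.C (c ν) *
          ∏ i, MvPolynomial.hsymm (Fin N) (Polynomial ℤ) (ν i) := by
  classical
  set P := Finset.univ.filter (fun p : Fin n × Fin n => p.1 < p.2) with hP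
  set g : (Fin n × Fin n → Fin (n * (∑ i, μ i) + 1)) → (Fin n → ℕ) :=
    fun t k => (raisedVec μ t k).toNat with hg
  set w : (Fin n × Fin n → Fin (n * (∑ i, μ i) + 1)) → Polynomial ℤ :=
    fun t => ∏ p ∈ P, coeffD (Polynomial.X + 1) (t p) with hw
  set S : Finset (Fin n × Fin n → Fin (n * (∑ i, μ i) + 1)) :=
    Finset.univ.filter (fun t => ∀ k, 0 ≤ raisedVec μ t k) with hS
  refine ⟨S.image g, fun ν => ∑ t ∈ S.filter (fun t => g t = ν), w t, ?_, ?_⟩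
  · intro ν _ m
    rw [Polynomial.finset_sum_coeff]
    refine Finset.sum_nonneg fun t _ => ?_
    exact PNonneg.prod P _ (fun p _ => pnonneg_coeffD _) m
  · rw [transformedHL]
    rw [← Finset.sum_filter_add_sum_filter_not Finset.univ
      (fun t => ∀ k, 0 ≤ raisedVec μ t k)]
    have hzero : ∑ t ∈ Finset.univ.filter
        (fun t => ¬ ∀ k, 0 ≤ raisedVec μ t k),
        MvPolynomial.C (w t) * hProd N n (raisedVec μ t) = 0 := by
      refine Finset.sum_eq_zero fun t ht => ?_
      rw [Finset.mem_filter] at ht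
      rw [hProd, if_neg ht.2, mul_zero]
    rw [hzero, add_zero]
    rw [← hS]
    have hterm : ∀ t ∈ S, MvPolynomial.C (w t) * hProd N n (raisedVec μ t)
        = MvPolynomial.C (w t) * ∏ i, MvPolynomial.hsymm (Fin N) (Polynomial ℤ) (g t i) := by
      intro t ht
      rw [Finset.mem_filter] at ht
      rw [hProd, if_pos ht.2]
    rw [Finset.sum_congr rfl hterm]
    rw [← Finset.sum_fiberwise_of_maps_to (g := g) (t := S.image g)
      (fun t ht => Finset.mem_image_of_mem g ht)]
    refine Finset.sum_congr rfl fun ν _ => ?_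
    rw [map_sum, Finset.sum_mul]
    refine Finset.sum_congr rfl fun t ht => ?_
    rw [Finset.mem_filter] at ht
    rw [ht.2]
end
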